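/- Let f : ℝ × ℝ × ℝ × ℝ → ℝ, let δ ≠ 0 and σ ≠ 0 be real constants, and let u₀, v₀, v_∞ ∈ ℝ. Let h* > 0 and suppose u* : ℝ → ℝ is three times differentiable, satisfies the extended equation with parameter h*, i.e. u*'''(x) = h*^{(1−3δ)/σ} f(h*^{−δ/σ} x, h*^{−1/σ} u*(x), h*^{(δ−1)/σ} u*'(x), h*^{(2δ−1)/σ} u*''(x)) for all x ≥ 0, satisfies u*(0) = h*^{1/σ} u₀ and u*'(0) = h*^{(1−δ)/σ} v₀, and satisfies u*'(x) → h*^{(1−δ)/σ} v_∞ as x → ∞ (this last condition expresses that h* is a zero of the transformation function Γ). Then u(x) := h*^{−1/σ} · u*(h*^{δ/σ} x) solves the BVP (1.1): u'''(x) = f(x, u(x), u'(x), u''(x)) for all x ≥ 0, u(0) = u₀, u'(0) = v₀, and u'(x) → v_∞ as x → ∞. -/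

import Mathlib

open Real Filter Topology

/-- `u` is three times differentiable. -/
def ThreeDiff (u : ℝ → ℝ) : Prop :=
  Differentiable ℝ u ∧ Differentiable ℝ (deriv u) ∧ Differentiable ℝ (deriv (deriv u))

/-- The extended equation with parameter `h` (powers are real powers of the positive real `h`). -/
def ExtEq (f : ℝ × ℝ × ℝ × ℝ → ℝ) (δ σ h : ℝ) (u : ℝ → ℝ) : Prop :=
  ∀ x : ℝ, 0 ≤ x → deriv (deriv (deriv u)) x =
    h ^ ((1 - 3 * δ) / σ) *
      f (h ^ (-δ / σ) * x, h ^ (-1 / σ) * u x,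
         h ^ ((δ - 1) / σ) * deriv u x, h ^ ((2 * δ - 1) / σ) * deriv (deriv u) x)

/-- `u` solves the BVP (1.1). -/
def SolvesBVP (f : ℝ × ℝ × ℝ × ℝ → ℝ) (u₀ v₀ vinf : ℝ) (u : ℝ → ℝ) : Prop :=
  ThreeDiff u ∧
  (∀ x : ℝ, 0 ≤ x → deriv (deriv (deriv u)) x = f (x, u x, deriv u x, deriv (deriv u) x)) ∧
  u 0 = u₀ ∧ deriv u 0 = v₀ ∧ Tendsto (deriv u) atTop (𝓝 vinf)

lemma hasDerivAt_scale (g : ℝ → ℝ) (hg : Differentiable ℝ g) (a c x : ℝ) :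
    HasDerivAt (fun x => a * g (c * x)) (a * c * deriv g (c * x)) x := by
  have h1 : HasDerivAt (fun y : ℝ => c * y) c x := by
    simpa using (hasDerivAt_id x).const_mul c
  have h2 := ((hg (c * x)).hasDerivAt.comp x h1).const_mul a
  rw [show a * c * deriv g (c * x) = a * (deriv g (c * x) * c) by ring]
  exact h2

lemma deriv_scale (g : ℝ → ℝ) (hg : Differentiable ℝ g) (a c : ℝ) :
    deriv (fun x => a * g (c * x)) = fun x => (a * c) * deriv g (c * x) := by
  funext x
  exact (hasDerivAt_scale g hg a c x).deriv

lemma diff_scale (g : ℝ → ℝ) (hg : Differentiable ℝ g) (a c : ℝ) :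
    Differentiable ℝ (fun x => a * g (c * x)) :=
  fun x => (hasDerivAt_scale g hg a c x).differentiableAt

theorem stmt2 (f : ℝ × ℝ × ℝ × ℝ → ℝ) (δ σ : ℝ) (hδ : δ ≠ 0) (hσ : σ ≠ 0)
    (u₀ v₀ vinf : ℝ) (hstar : ℝ) (hhstar : 0 < hstar)
    (ustar : ℝ → ℝ) (hthree : ThreeDiff ustar)
    (heq : ExtEq f δ σ hstar ustar)
    (hic1 : ustar 0 = hstar ^ (1 / σ) * u₀)
    (hic2 : deriv ustar 0 = hstar ^ ((1 - δ) / σ) * v₀)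
    (hlim : Tendsto (deriv ustar) atTop (𝓝 (hstar ^ ((1 - δ) / σ) * vinf))) :
    SolvesBVP f u₀ v₀ vinf (fun x => hstar ^ (-1 / σ) * ustar (hstar ^ (δ / σ) * x)) := by
  obtain ⟨hd1, hd2, hd3⟩ := hthree
  set a : ℝ := hstar ^ (-1 / σ) with ha
  set c : ℝ := hstar ^ (δ / σ) with hc
  have hcpos : 0 < c := Real.rpow_pos_of_pos hhstar _
  have hD1 : deriv (fun x => a * ustar (c * x)) = fun x => (a * c) * deriv ustar (c * x) :=
    deriv_scale ustar hd1 a c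
  have hD2 : deriv (deriv (fun x => a * ustar (c * x)))
      = fun x => (a * c * c) * deriv (deriv ustar) (c * x) := by
    rw [hD1, deriv_scale (deriv ustar) hd2 (a * c) c]
  have hD3 : deriv (deriv (deriv (fun x => a * ustar (c * x))))
      = fun x => (a * c * c * c) * deriv (deriv (deriv ustar)) (c * x) := by
    rw [hD2, deriv_scale (deriv (deriv ustar)) hd3 (a * c * c) c]
  have hrw : ∀ p q : ℝ, hstar ^ p * hstar ^ q = hstar ^ (p + q) :=
    fun p q => (Real.rpow_add hhstar p q).symm
  refine ⟨⟨diff_scale ustar hd1 a c, ?_, ?_⟩, ?_, ?_, ?_, ?_⟩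
  · rw [hD1]; exact diff_scale (deriv ustar) hd2 (a * c) c
  · rw [hD2]; exact diff_scale (deriv (deriv ustar)) hd3 (a * c * c) c
  · -- the ODE
    intro x hx
    rw [hD3, hD2, hD1]; beta_reduce
    have hcx : (0:ℝ) ≤ c * x := mul_nonneg hcpos.le hx
    rw [heq (c * x) hcx]
    have e1 : hstar ^ (-δ / σ) * (c * x) = x := by
      rw [← mul_assoc, hc, hrw, show -δ / σ + δ / σ = 0 by ring, Real.rpow_zero, one_mul]
    have e2 : hstar ^ (-1 / σ) * ustar (c * x) = a * ustar (c * x) := by rw [ha]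
    have e3 : hstar ^ ((δ - 1) / σ) * deriv ustar (c * x) = a * c * deriv ustar (c * x) := by
      rw [ha, hc, hrw, show -1 / σ + δ / σ = (δ - 1) / σ by ring]
    have e4 : hstar ^ ((2 * δ - 1) / σ) * deriv (deriv ustar) (c * x)
        = a * c * c * deriv (deriv ustar) (c * x) := by
      rw [ha, hc, hrw, hrw, show -1 / σ + δ / σ + δ / σ = (2 * δ - 1) / σ by ring]
    rw [e1, e2, e3, e4, ← mul_assoc]
    have e5 : a * c * c * c * hstar ^ ((1 - 3 * δ) / σ) = 1 := by
      rw [ha, hc, hrw, hrw, hrw, hrw,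
        show -1 / σ + δ / σ + δ / σ + δ / σ + (1 - 3 * δ) / σ = 0 by ring, Real.rpow_zero]
    rw [e5, one_mul]
  · -- initial condition 1
    simp only [mul_zero, hic1, ha, ← mul_assoc, hrw,
      show -1 / σ + 1 / σ = 0 by ring, Real.rpow_zero, one_mul]
  · -- initial condition 2
    rw [hD1]
    simp only [mul_zero, hic2, ha, hc, ← mul_assoc, hrw, hrw,
      show -1 / σ + δ / σ + (1 - δ) / σ = 0 by ring, Real.rpow_zero, one_mul]
  · -- limit
    rw [hD1]
    have hone : a * c * (hstar ^ ((1 - δ) / σ) * vinf) = vinf := by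
      rw [← mul_assoc, ha, hc, hrw, hrw,
        show -1 / σ + δ / σ + (1 - δ) / σ = 0 by ring, Real.rpow_zero, one_mul]
    rw [← hone]
    have htend : Tendsto (fun x : ℝ => c * x) atTop atTop :=
      tendsto_atTop_atTop_of_monotone' (fun p q h => by nlinarith) (by
        refine not_bddAbove_iff.mpr fun b => ?_
        exact ⟨c * (max (b / c + 1) 0 + 1), ⟨_, rfl⟩, by
          have := le_max_left (b / c + 1) 0
          nlinarith [div_le_iff₀ hcpos |>.mp (le_refl (b / c))]⟩)
    exact ((hlim.comp htend).const_mul (a * c)).congr (fun x => rfl)
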